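/- Let n ≥ 2 and let G = SU(n) × U(1) act on ℂⁿ ⊕ ℂ by the two representations ρ₁(A,z)(v,w) = (z·Av, z·w) and ρ₂(A,z)(v,w) = (Av, z·w), and let e₁ denote the first standard basis vector of ℂⁿ. Then the stabilizer of the singular point (e₁, 0) under ρ₁, namely {(A,z) : z·Ae₁ = e₁}, and its stabilizer under ρ₂, namely {(A,z) : Ae₁ = e₁}, are not conjugate as subgroups of G: there is no g ∈ G with g · Stab_{ρ₁}(e₁,0) · g⁻¹ = Stab_{ρ₂}(e₁,0). In particular the collections of isotropy subgroups (histories) of the two representations differ. -/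

import Mathlib

/-- The special unitary group SU(n): unitary n×n complex matrices of determinant 1,
as a subgroup of the unitary group. -/
def SU (n : ℕ) : Subgroup (Matrix.unitaryGroup (Fin n) ℂ) where
  carrier := {A | (A : Matrix (Fin n) (Fin n) ℂ).det = 1}
  one_mem' := by simp
  mul_mem' := by
    intro a b ha hb
    simp only [Set.mem_setOf_eq] at *
    rw [Matrix.UnitaryGroup.mul_val, Matrix.det_mul, ha, hb, one_mul]
  inv_mem' := by
    intro a ha
    simp only [Set.mem_setOf_eq] at *
    rw [Matrix.UnitaryGroup.inv_val]
    show (star (a : Matrix (Fin n) (Fin n) ℂ)).det = 1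
    rw [Matrix.star_eq_conjTranspose, Matrix.det_conjTranspose, ha, star_one]

/-- The representation ρ₁ of SU(n) × U(1) on ℂⁿ ⊕ ℂ:
ρ₁(A,z)(v,w) = (z·(Av), z·w) (the cover of the standard U(n) action on ℂⁿ
times the circle action on ℂ). -/
noncomputable def rho1 (n : ℕ) (g : SU n × Circle) (p : (Fin n → ℂ) × ℂ) :
    (Fin n → ℂ) × ℂ :=
  ((g.2 : ℂ) • ((g.1 : Matrix (Fin n) (Fin n) ℂ).mulVec p.1), (g.2 : ℂ) * p.2)

/-- The representation ρ₂ of SU(n) × U(1) on ℂⁿ ⊕ ℂ: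
ρ₂(A,z)(v,w) = (Av, z·w) (the factor-wise product action). -/
noncomputable def rho2 (n : ℕ) (g : SU n × Circle) (p : (Fin n → ℂ) × ℂ) :
    (Fin n → ℂ) × ℂ :=
  ((g.1 : Matrix (Fin n) (Fin n) ℂ).mulVec p.1, (g.2 : ℂ) * p.2)

theorem Subgroup.mem_of_conj_image_eq_of_mem_center {G : Type*} [Group G] {S T : Set G}
    {g c : G} (hST : (fun h => g * h * g⁻¹) '' S = T) (hc : c ∈ Subgroup.center G)
    (hcT : c ∈ T) : c ∈ S := by
  rw [← hST] at hcT
  obtain ⟨h, hS, hh⟩ := hcT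
  have hfix : g * c * g⁻¹ = c := by rw [Subgroup.mem_center_iff.mp hc g, mul_inv_cancel_right]
  rw [← hfix, mul_left_inj, mul_right_inj] at hh
  exact hh ▸ hS

theorem Subgroup.mk_one_mem_center_prod {G H : Type*} [Group G] [CommGroup H] (z : H) :
    ((1 : G), z) ∈ Subgroup.center (G × H) := by
  rw [Subgroup.center_prod]
  exact ⟨Subgroup.one_mem _, Subgroup.mem_center_iff.mpr fun g => mul_comm g z⟩

theorem Circle.eq_one_of_smul_eq_self {V : Type*} [AddCommGroup V] [Module ℂ V] {z : Circle}
    {v : V} (hv : v ≠ 0) (h : (z : ℂ) • v = v) : z = 1 := by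
  rw [← Circle.coe_eq_one]
  exact smul_left_injective ℂ hv (by simpa using h)

theorem rho1_mk_zero (n : ℕ) (g : SU n × Circle) (v : Fin n → ℂ) :
    rho1 n g (v, 0) = ((g.2 : ℂ) • (g.1 : Matrix (Fin n) (Fin n) ℂ).mulVec v, 0) := by
  simp [rho1]

theorem rho2_mk_zero (n : ℕ) (g : SU n × Circle) (v : Fin n → ℂ) :
    rho2 n g (v, 0) = ((g.1 : Matrix (Fin n) (Fin n) ℂ).mulVec v, 0) := by
  simp [rho2]

/-- The stabilizer of the singular point (e₁,0) under ρ₁ is {(A,z) : z·Ae₁ = e₁},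
its stabilizer under ρ₂ is {(A,z) : Ae₁ = e₁}, and these two subgroups of
G = SU(n) × U(1) are not conjugate in G. -/
theorem stabilizers_not_conjugate (n : ℕ) (hn : 2 ≤ n) :
    let e₁ : Fin n → ℂ := Pi.single (⟨0, by omega⟩ : Fin n) 1
    ({h : SU n × Circle | rho1 n h (e₁, 0) = (e₁, 0)} =
      {h : SU n × Circle |
        (h.2 : ℂ) • (h.1 : Matrix (Fin n) (Fin n) ℂ).mulVec e₁ = e₁}) ∧
    ({h : SU n × Circle | rho2 n h (e₁, 0) = (e₁, 0)} =
      {h : SU n × Circle | (h.1 : Matrix (Fin n) (Fin n) ℂ).mulVec e₁ = e₁}) ∧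
    ¬ ∃ g : SU n × Circle,
      (fun h : SU n × Circle => g * h * g⁻¹) ''
          {h : SU n × Circle | rho1 n h (e₁, 0) = (e₁, 0)} =
        {h : SU n × Circle | rho2 n h (e₁, 0) = (e₁, 0)} := by
  intro e₁
  refine ⟨by ext; simp [rho1_mk_zero], by ext; simp [rho2_mk_zero], ?_⟩
  rintro ⟨g, hg⟩
  have central_fixes_e₁ : ∀ z : Circle, rho1 n (1, z) (e₁, 0) = (e₁, 0) → z = 1 := fun z hz =>
    Circle.eq_one_of_smul_eq_self (Pi.single_ne_zero_iff.mpr one_ne_zero)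
      (by simpa [rho1_mk_zero] using hz)
  -- `(1, z)` is central and fixes `(e₁, 0)` under ρ₂, so conjugation carries it into the
  -- ρ₁-stabilizer; take `z = -1`.
  refine Circle.exp_pi_ne_one (central_fixes_e₁ _ ?_)
  exact Subgroup.mem_of_conj_image_eq_of_mem_center (c := (1, Circle.exp Real.pi)) hg
    (Subgroup.mk_one_mem_center_prod _) (by simp [rho2_mk_zero])
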